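/- arXiv:0902.0101 — 4 statements merged into one kernel-verified Lean document; each statement's English description precedes it below -/
import Mathlib

section
/- Let n ≥ 1 be a natural number, let p be a real number with 0 < p ≤ 1, and let a₁,…,aₙ be real numbers with each aᵢ ∈ {0, 1, 2}. Then p/2^(n+1) + ∑_{i=1}^{n} aᵢ/2^(i+1) = 1/2 if and only if p = 1 and aᵢ = 1 for all i = 1,…,n. -/
/-!
Twice the payoff, with indices shifted down by one, is
`S = p / 2 ^ n + ∑_{i < n} aᵢ / 2 ^ (i + 1)`. Peeling off the first digit gives
`S = (a₀ + S') / 2`, where `S'` is the same sum for the remaining digits. As long as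
`0 < p < 2` and the digits lie in `[0, 2]`, `S'` lies strictly between `0` and `2`, so `S = 1`
forces `a₀ = 1` and `S' = 1`, and we recurse down to `p = 1`.
-/

open Finset

noncomputable def payoff (p : ℝ) (a : ℕ → ℝ) (n : ℕ) : ℝ :=
  p / 2 ^ n + ∑ i ∈ range n, a i / 2 ^ (i + 1)

@[simp]
lemma payoff_zero (p : ℝ) (a : ℕ → ℝ) : payoff p a 0 = p := by
  simp [payoff]

lemma payoff_succ (p : ℝ) (a : ℕ → ℝ) (n : ℕ) :
    payoff p a (n + 1) = (a 0 + payoff p (fun i => a (i + 1)) n) / 2 := by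
  rw [payoff, payoff, sum_range_succ', add_div, add_div, sum_div]
  simp only [pow_succ, div_div]
  ring

lemma payoff_pos {p : ℝ} (hp : 0 < p) {n : ℕ} {a : ℕ → ℝ} (ha : ∀ i < n, 0 ≤ a i) :
    0 < payoff p a n := by
  induction n generalizing a with
  | zero => simpa using hp
  | succ n ih =>
    have := ih fun i hi => ha (i + 1) (by omega)
    have := ha 0 (by omega)
    rw [payoff_succ]
    positivity

lemma payoff_lt_two {p : ℝ} (hp : p < 2) {n : ℕ} {a : ℕ → ℝ} (ha : ∀ i < n, a i ≤ 2) :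
    payoff p a n < 2 := by
  induction n generalizing a with
  | zero => simpa using hp
  | succ n ih =>
    have := ih fun i hi => ha (i + 1) (by omega)
    have := ha 0 (by omega)
    rw [payoff_succ]
    linarith

theorem payoff_eq_one_iff {p : ℝ} (hp0 : 0 < p) (hp2 : p < 2) {n : ℕ} {a : ℕ → ℝ}
    (ha : ∀ i < n, a i = 0 ∨ a i = 1 ∨ a i = 2) :
    payoff p a n = 1 ↔ p = 1 ∧ ∀ i < n, a i = 1 := by
  induction n generalizing a with
  | zero => simp
  | succ n ih =>
    have ha' : ∀ i < n, a (i + 1) = 0 ∨ a (i + 1) = 1 ∨ a (i + 1) = 2 :=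
      fun i hi => ha (i + 1) (by omega)
    have hpos : 0 < payoff p (fun i => a (i + 1)) n :=
      payoff_pos hp0 fun i hi => by rcases ha' i hi with h | h | h <;> simp [h]
    have hlt : payoff p (fun i => a (i + 1)) n < 2 :=
      payoff_lt_two hp2 fun i hi => by rcases ha' i hi with h | h | h <;> simp [h]
    rw [payoff_succ, Nat.forall_lt_succ_left]
    rcases ha 0 (by omega) with h0 | h0 | h0
    · simp only [h0, zero_ne_one, false_and, and_false, iff_false]
      linarith
    · simp only [h0, true_and, ← ih ha']
      constructor <;> intro h <;> linarith
    · simp only [h0, OfNat.ofNat_ne_one, false_and, and_false, iff_false]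
      linarith

lemma Icc_one_eq_map_range (n : ℕ) : Icc 1 n = (range n).map (addRightEmbedding 1) := by
  rw [range_eq_Ico, map_add_right_Ico, zero_add, Ico_add_one_right_eq_Icc]

theorem stmt_0_general (n : ℕ) (p : ℝ) (hp0 : 0 < p) (hp1 : p ≤ 1)
    (a : ℕ → ℝ) (ha : ∀ i ∈ Finset.Icc 1 n, a i = 0 ∨ a i = 1 ∨ a i = 2) :
    p / 2 ^ (n + 1) + ∑ i ∈ Finset.Icc 1 n, a i / 2 ^ (i + 1) = 1 / 2 ↔
      p = 1 ∧ ∀ i ∈ Finset.Icc 1 n, a i = 1 := by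
  have hp2 : p < 2 := by linarith
  have hpayoff : p / 2 ^ (n + 1) + ∑ i ∈ Icc 1 n, a i / 2 ^ (i + 1)
      = payoff p (fun i => a (i + 1)) n / 2 := by
    rw [payoff, Icc_one_eq_map_range, sum_map, add_div, sum_div]
    simp only [addRightEmbedding_apply, pow_succ, div_div]
  rw [hpayoff, div_left_inj' two_ne_zero]
  simp only [Icc_one_eq_map_range, forall_mem_map, addRightEmbedding_apply, mem_range] at ha ⊢
  exact payoff_eq_one_iff hp0 hp2 ha

/-- Arithmetic core of the NP-hardness proof: player 1's expected payoff
`p/2^(n+1) + ∑_{i=1}^n aᵢ/2^(i+1)` equals `1/2` iff `p = 1` and each `aᵢ = 1`. -/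
theorem stmt_0 (n : ℕ) (hn : 1 ≤ n) (p : ℝ) (hp0 : 0 < p) (hp1 : p ≤ 1)
    (a : ℕ → ℝ) (ha : ∀ i ∈ Finset.Icc 1 n, a i = 0 ∨ a i = 1 ∨ a i = 2) :
    p / 2 ^ (n + 1) + ∑ i ∈ Finset.Icc 1 n, a i / 2 ^ (i + 1) = 1 / 2 ↔
      p = 1 ∧ ∀ i ∈ Finset.Icc 1 n, a i = 1 :=
  stmt_0_general n p hp0 hp1 a ha
end

section
/- Let p be a real number with 1/2 < p < 1. For every real x with 0 ≤ x ≤ 1 and p²·x² − 2·p·x + 2·p − 1 ≥ 0, it holds that (1 − p)/(1 − x²·p²) ≤ S(p) = (√(2 − 2p) − p + 1)/(2p + 2), and equality holds for x = x*(p) = (1 − √(2 − 2p))/p. -/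
/-- One-variable optimization in the gadget game `G(p)`: subject to the
equilibrium constraint, player 3's payoff `(1−p)/(1−x²p²)` is at most
`S(p) = (√(2−2p) − p + 1)/(2p + 2)`, with equality at `x = x*(p)`. -/
theorem stmt_7 (p : ℝ) (hp1 : 1 / 2 < p) (hp2 : p < 1) :
    (∀ x : ℝ, 0 ≤ x → x ≤ 1 → p ^ 2 * x ^ 2 - 2 * p * x + 2 * p - 1 ≥ 0 →
      (1 - p) / (1 - x ^ 2 * p ^ 2) ≤ (Real.sqrt (2 - 2 * p) - p + 1) / (2 * p + 2)) ∧
    (1 - p) / (1 - ((1 - Real.sqrt (2 - 2 * p)) / p) ^ 2 * p ^ 2) =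
      (Real.sqrt (2 - 2 * p) - p + 1) / (2 * p + 2) := by
  have hp0 : (0:ℝ) < p := by linarith
  set s := Real.sqrt (2 - 2 * p) with hs
  have hnn : (0:ℝ) ≤ 2 - 2 * p := by linarith
  have hs2 : s ^ 2 = 2 - 2 * p := Real.sq_sqrt hnn
  have hspos : 0 < s := Real.sqrt_pos.mpr (by linarith)
  have hs1 : s < 1 := by
    nlinarith [hs2, hspos]
  have hden : (0:ℝ) < s * (2 - s) := by nlinarith
  have key : (1 - p) / (s * (2 - s)) = (s - p + 1) / (2 * p + 2) := by
    rw [div_eq_div_iff hden.ne' (by positivity : (2*p+2:ℝ) ≠ 0)]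
    nlinarith [hs2]
  constructor
  · intro x hx0 hx1 hcon
    have hpx : p * x ≤ 1 - s := by
      have h1 : (1 - p * x) ^ 2 ≥ s ^ 2 := by nlinarith
      have h2 : 0 < 1 - p * x := by nlinarith
      nlinarith
    have hxp0 : 0 ≤ p * x := by positivity
    have hd2 : s * (2 - s) ≤ 1 - x ^ 2 * p ^ 2 := by nlinarith
    calc (1 - p) / (1 - x ^ 2 * p ^ 2) ≤ (1 - p) / (s * (2 - s)) :=
          div_le_div_of_nonneg_left (by linarith) hden hd2
      _ = (s - p + 1) / (2 * p + 2) := key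
  · have hx : ((1 - s) / p) ^ 2 * p ^ 2 = (1 - s) ^ 2 := by
      field_simp
    rw [hx]
    have : 1 - (1 - s) ^ 2 = s * (2 - s) := by ring
    rw [this, key]
end

section
/- Let p be a real number with 1/2 < p < 1 and let x₁, x₂ be reals in [0,1] such that p·(1 − x₁)/(1 − x₁·x₂·p²) ≥ 1/2 and p·(1 − x₂)/(1 − x₁·x₂·p²) ≥ 1/2. Then (1 − p)/(1 − x₁·x₂·p²) ≤ S(p) = (√(2 − 2p) − p + 1)/(2p + 2). Moreover, the pair x₁ = x₂ = x*(p) = (1 − √(2 − 2p))/p satisfies both constraints and achieves (1 − p)/(1 − x₁·x₂·p²) = S(p). -/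
/-- Two-variable version: under the equilibrium constraints, player 3's payoff
`(1−p)/(1−x₁x₂p²)` is at most `S(p)`, and the diagonal pair
`x₁ = x₂ = x*(p)` satisfies both constraints and achieves `S(p)`. -/
theorem stmt_10 (p : ℝ) (hp1 : 1 / 2 < p) (hp2 : p < 1) :
    (∀ x₁ x₂ : ℝ, 0 ≤ x₁ → x₁ ≤ 1 → 0 ≤ x₂ → x₂ ≤ 1 →
      p * (1 - x₁) / (1 - x₁ * x₂ * p ^ 2) ≥ 1 / 2 →
      p * (1 - x₂) / (1 - x₁ * x₂ * p ^ 2) ≥ 1 / 2 →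
      (1 - p) / (1 - x₁ * x₂ * p ^ 2) ≤
        (Real.sqrt (2 - 2 * p) - p + 1) / (2 * p + 2)) ∧
    (p * (1 - (1 - Real.sqrt (2 - 2 * p)) / p) /
        (1 - ((1 - Real.sqrt (2 - 2 * p)) / p) * ((1 - Real.sqrt (2 - 2 * p)) / p) * p ^ 2)
        ≥ 1 / 2 ∧
      (1 - p) /
        (1 - ((1 - Real.sqrt (2 - 2 * p)) / p) * ((1 - Real.sqrt (2 - 2 * p)) / p) * p ^ 2)
        = (Real.sqrt (2 - 2 * p) - p + 1) / (2 * p + 2)) := by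
  have hp0 : (0:ℝ) < p := by linarith
  set s := Real.sqrt (2 - 2 * p) with hs
  have h2p : (0:ℝ) ≤ 2 - 2 * p := by linarith
  have hs2 : s ^ 2 = 2 - 2 * p := Real.sq_sqrt h2p
  have hs0 : 0 < s := Real.sqrt_pos.mpr (by linarith)
  have hs1 : s < 1 := by nlinarith
  have hsp : 0 < s + p - 1 := by nlinarith
  constructor
  · intro x₁ x₂ h10 h11 h20 h21 hc1 hc2
    have hD : 0 < 1 - x₁ * x₂ * p ^ 2 := by nlinarith [mul_le_one₀ h11 h20 h21, mul_nonneg h10 h20]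
    rw [ge_iff_le, le_div_iff₀ hD] at hc1 hc2
    rw [div_le_div_iff₀ hD (by linarith)]
    have hu : 0 ≤ p * x₁ := by positivity
    have hv : 0 ≤ p * x₂ := by positivity
    -- t = x₁x₂p²
    have hkey : 4 * (x₁ * x₂ * p ^ 2) ≤ (x₁ * x₂ * p ^ 2 + 2 * p - 1) ^ 2 := by
      nlinarith [sq_nonneg (p * x₁ - p * x₂), sq_nonneg (p * x₁ + p * x₂),
        mul_nonneg hu hv]
    have hB : x₁ * x₂ * p ^ 2 < 3 - 2 * p + 2 * s := by nlinarith
    have ht : x₁ * x₂ * p ^ 2 ≤ 3 - 2 * p - 2 * s := by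
      nlinarith [hkey, hB, sq_nonneg (x₁ * x₂ * p ^ 2 - (3 - 2 * p))]
    nlinarith [ht, hsp, hs0]
  · have hx : ((1 - s) / p) * ((1 - s) / p) * p ^ 2 = (1 - s) ^ 2 := by
      field_simp
    have hy : p * (1 - (1 - s) / p) = p - 1 + s := by
      field_simp; ring
    rw [hx, hy]
    have hDen : 1 - (1 - s) ^ 2 = 2 * (s + p - 1) := by nlinarith
    rw [hDen]
    constructor
    · rw [ge_iff_le, le_div_iff₀ (by linarith)]; linarith
    · rw [div_eq_div_iff (by positivity) (by positivity)]
      linear_combination (-2:ℝ) * hs2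
end

section
/- Let n ≥ 1, let d₁,…,dₙ be positive integers, let d = ∑_{i=1}^{n} dᵢ, let k be a natural number with k ≤ d, and set pᵢ = 1 − dᵢ/(2·d²) for each i. Then ∑_{i=1}^{n} ((4·d² − dᵢ)/(4·d²·n)) · S(pᵢ) ≥ (2k + 1)/(8·d·n) if and only if ∑_{i=1}^{n} √(dᵢ) ≥ k, where S(p) = (√(2 − 2p) − p + 1)/(2p + 2). -/
/-!
With `p = 1 − x/(2D²)` the payoff `S(p)` is `(2D√x + x)/(2(4D² − x))`, so the weight
`(4D² − x)/(4D²n)` cancels its denominator and each summand is `(2D√dᵢ + dᵢ)/(8D²n)`.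
Since `∑ dᵢ = D`, the sum collapses to `(2∑√dᵢ + 1)/(8Dn)`, and comparing it with
`(2k + 1)/(8Dn)` is comparing `∑√dᵢ` with `k`.
-/

open Finset

/-- The paper's `S(p)`. -/
noncomputable def entryPayoff (p : ℝ) : ℝ := (√(2 - 2 * p) - p + 1) / (2 * p + 2)

lemma entryPayoff_one_sub_div {D : ℝ} (hD : 0 < D) (x : ℝ) :
    entryPayoff (1 - x / (2 * D ^ 2)) = (2 * D * √x + x) / (2 * (4 * D ^ 2 - x)) := by
  have hsqrt : √(2 - 2 * (1 - x / (2 * D ^ 2))) = √x / D := by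
    rw [show 2 - 2 * (1 - x / (2 * D ^ 2)) = x / D ^ 2 by field_simp; ring,
      Real.sqrt_div' x (sq_nonneg D), Real.sqrt_sq hD.le]
  rw [entryPayoff, hsqrt]
  field_simp
  ring

lemma weight_mul_entryPayoff {D x : ℝ} (hD : 0 < D) (hx : x ≠ 4 * D ^ 2) (N : ℝ) :
    (4 * D ^ 2 - x) / (4 * D ^ 2 * N) * entryPayoff (1 - x / (2 * D ^ 2)) =
      (2 * D * √x + x) / (8 * D ^ 2 * N) := by
  have hx' : 4 * D ^ 2 - x ≠ 0 := sub_ne_zero.mpr hx.symm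
  rw [entryPayoff_one_sub_div hD]
  field_simp
  ring

lemma sum_weight_mul_entryPayoff {ι : Type*} (s : Finset ι) (d : ι → ℕ) {D : ℕ}
    (hD : D = ∑ i ∈ s, d i) (hD0 : 0 < D) (N : ℝ) :
    ∑ i ∈ s, (4 * (D : ℝ) ^ 2 - d i) / (4 * (D : ℝ) ^ 2 * N) *
        entryPayoff (1 - d i / (2 * (D : ℝ) ^ 2)) =
      (2 * ∑ i ∈ s, √(d i : ℝ) + 1) / (8 * D * N) := by
  have hDr : (0 : ℝ) < D := by exact_mod_cast hD0
  have hsum : ∑ i ∈ s, (d i : ℝ) = D := by rw [hD]; push_cast; rfl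
  have hsmall : ∀ i ∈ s, (d i : ℝ) ≠ 4 * (D : ℝ) ^ 2 := fun i hi => by
    have hle : (d i : ℝ) ≤ D := by
      rw [← hsum]; exact single_le_sum (fun j _ => Nat.cast_nonneg (d j)) hi
    have hD1 : (1 : ℝ) ≤ D := by exact_mod_cast hD0
    nlinarith
  rw [sum_congr rfl fun i hi => weight_mul_entryPayoff hDr (hsmall i hi) N, ← sum_div,
    sum_add_distrib, ← mul_sum, hsum]
  field_simp

theorem stmt_14_general (n : ℕ) (hn : 1 ≤ n) (d : ℕ → ℕ)
    (hd : ∀ i ∈ Finset.Icc 1 n, 0 < d i) (D : ℕ) (hD : D = ∑ i ∈ Finset.Icc 1 n, d i)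
    (k : ℕ) :
    (∑ i ∈ Finset.Icc 1 n,
        ((4 * (D : ℝ) ^ 2 - (d i : ℝ)) / (4 * (D : ℝ) ^ 2 * n)) *
          ((Real.sqrt (2 - 2 * (1 - (d i : ℝ) / (2 * (D : ℝ) ^ 2))) -
              (1 - (d i : ℝ) / (2 * (D : ℝ) ^ 2)) + 1) /
            (2 * (1 - (d i : ℝ) / (2 * (D : ℝ) ^ 2)) + 2)))
      ≥ (2 * (k : ℝ) + 1) / (8 * (D : ℝ) * n) ↔
    ∑ i ∈ Finset.Icc 1 n, Real.sqrt (d i) ≥ (k : ℝ) := by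
  have hD0 : 0 < D := hD ▸ sum_pos hd ⟨1, mem_Icc.mpr ⟨le_rfl, hn⟩⟩
  have hscale : (0 : ℝ) < 8 * D * n := by positivity
  have hsum := sum_weight_mul_entryPayoff (Icc 1 n) d hD hD0 n
  unfold entryPayoff at hsum
  rw [hsum, ge_iff_le, ge_iff_le, div_le_div_iff_of_pos_right hscale]
  constructor <;> intro h <;> linarith

/-- Correctness of the threshold comparison in the reduction from SqrtSum to
StatNE: with `pᵢ = 1 − dᵢ/(2d²)` and `S(p) = (√(2 − 2p) − p + 1)/(2p + 2)`,
`∑ᵢ ((4d² − dᵢ)/(4d²n)) · S(pᵢ) ≥ (2k + 1)/(8dn)` iff `∑ᵢ √dᵢ ≥ k`. -/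
theorem stmt_14 (n : ℕ) (hn : 1 ≤ n) (d : ℕ → ℕ)
    (hd : ∀ i ∈ Finset.Icc 1 n, 0 < d i) (D : ℕ) (hD : D = ∑ i ∈ Finset.Icc 1 n, d i)
    (k : ℕ) (hk : k ≤ D) :
    (∑ i ∈ Finset.Icc 1 n,
        ((4 * (D : ℝ) ^ 2 - (d i : ℝ)) / (4 * (D : ℝ) ^ 2 * n)) *
          ((Real.sqrt (2 - 2 * (1 - (d i : ℝ) / (2 * (D : ℝ) ^ 2))) -
              (1 - (d i : ℝ) / (2 * (D : ℝ) ^ 2)) + 1) /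
            (2 * (1 - (d i : ℝ) / (2 * (D : ℝ) ^ 2)) + 2)))
      ≥ (2 * (k : ℝ) + 1) / (8 * (D : ℝ) * n) ↔
    ∑ i ∈ Finset.Icc 1 n, Real.sqrt (d i) ≥ (k : ℝ) :=
  stmt_14_general n hn d hd D hD k
end
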